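/- arXiv:1603.04558 — 2 statements merged into one kernel-verified Lean document; each statement's English description precedes it below -/
import Mathlib

section
/- For real numbers $a, b, q > 0$ with $a+b > q$, one has $B(a,b)\cdot{}_3F_2(a,b,q; a+b, q+1; 1) = \frac{q}{ab}\cdot{}_3F_2(1,1,a+b-q; a+1, b+1; 1)$, where $B$ denotes the Beta function and ${}_3F_2$ the generalized hypergeometric series. -/
open Finset

/-- Pochhammer (rising factorial) symbol `(x)_n`. -/
noncomputable def poch (x : ℝ) (n : ℕ) : ℝ := ∏ k ∈ Finset.range n, (x + k)

/-- Generalized hypergeometric series ₃F₂. -/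
noncomputable def F32 (a₁ a₂ a₃ b₁ b₂ z : ℝ) : ℝ :=
  ∑' n : ℕ, (poch a₁ n * poch a₂ n * poch a₃ n) /
    (poch b₁ n * poch b₂ n * n.factorial) * z ^ n

/-- Beta function. -/
noncomputable def Beta (a b : ℝ) : ℝ := Real.Gamma a * Real.Gamma b / Real.Gamma (a + b)

/-
With `t n = (a)_n (b)_n / ((a+b)_n n!)`, the `n`-th term on the left is `t n * q / (q + n)`, and
`1 / (q + n) = ∑ m, (a+b-q)_m / (a+b+n)_(m+1)`. This makes the left side `q` times a double
series of nonnegative terms. Summed over `n` first, its columns are Gauss sums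
`₂F₁(a, b; a+b+m+1; 1) = Γ(a+b+m+1) m! / (Γ(a+m+1) Γ(b+m+1))`, and after multiplying by
`B(a, b)` these are the terms `q (a+b-q)_m m! / ((a)_(m+1) (b)_(m+1))` of the right side.

Gauss's summation `₂F₁(a, b; c; 1) = Γ(c) Γ(c-a-b) / (Γ(c-a) Γ(c-b))` comes from the contiguous
relation `c (c-a-b) F(c) = (c-a) (c-b) F(c+1)`, iterated `m` times: as `m → ∞`, `F(c+m) → 1`,
and the accumulated Pochhammer quotient tends to the Gamma quotient by Euler's limit formula.
-/

open Filter Topology Asymptotics Real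

@[simp]
lemma poch_zero (x : ℝ) : poch x 0 = 1 := prod_range_zero _

lemma poch_succ_right (x : ℝ) (n : ℕ) : poch x (n + 1) = poch x n * (x + n) :=
  prod_range_succ _ _

lemma poch_add (x : ℝ) (n m : ℕ) : poch x (n + m) = poch x n * poch (x + n) m := by
  induction m with
  | zero => simp
  | succ m ih =>
    rw [← add_assoc, poch_succ_right, ih, poch_succ_right, mul_assoc]
    push_cast
    ring_nf

lemma poch_succ_left (x : ℝ) (n : ℕ) : poch x (n + 1) = x * poch (x + 1) n := by
  rw [add_comm n, poch_add]
  simp [poch]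

lemma poch_one (n : ℕ) : poch 1 n = n.factorial := by
  induction n with
  | zero => simp
  | succ n ih =>
    rw [poch_succ_right, ih, Nat.factorial_succ]
    push_cast
    ring

lemma poch_pos {x : ℝ} (hx : 0 < x) (n : ℕ) : 0 < poch x n :=
  prod_pos fun _ _ => by positivity

lemma poch_le_poch {x y : ℝ} (hx : 0 ≤ x) (hxy : x ≤ y) (n : ℕ) : poch x n ≤ poch y n :=
  prod_le_prod (fun _ _ => by positivity) fun _ _ => by linarith

lemma Gamma_add_nat_eq_mul_poch {s : ℝ} (hs : ∀ k : ℕ, s + k ≠ 0) (n : ℕ) :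
    Gamma (s + n) = Gamma s * poch s n := by
  induction n with
  | zero => simp
  | succ n ih =>
    rw [poch_succ_right, Nat.cast_succ, ← add_assoc, Gamma_add_one (hs n), ih]
    ring

lemma tendsto_poch_div_rpow_mul_factorial {s : ℝ} (hs : Gamma s ≠ 0) :
    Tendsto (fun n : ℕ => poch s (n + 1) / ((n : ℝ) ^ s * n.factorial)) atTop
      (𝓝 (Gamma s)⁻¹) :=
  ((GammaSeq_tendsto_Gamma s).inv₀ hs).congr fun _ => inv_div _ _

lemma tendsto_poch_ratio {a b c d : ℝ} (ha : Gamma a ≠ 0) (hb : Gamma b ≠ 0) (hc : Gamma c ≠ 0)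
    (hd : Gamma d ≠ 0) :
    Tendsto (fun n : ℕ => poch a (n + 1) * poch b (n + 1) / (poch c (n + 1) * poch d (n + 1))
      / (n : ℝ) ^ (a + b - c - d)) atTop (𝓝 (Gamma c * Gamma d / (Gamma a * Gamma b))) := by
  have hlim := ((tendsto_poch_div_rpow_mul_factorial ha).mul
    (tendsto_poch_div_rpow_mul_factorial hb)).div ((tendsto_poch_div_rpow_mul_factorial hc).mul
    (tendsto_poch_div_rpow_mul_factorial hd)) (by simp [hc, hd])
  rw [show (Gamma a)⁻¹ * (Gamma b)⁻¹ / ((Gamma c)⁻¹ * (Gamma d)⁻¹)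
    = Gamma c * Gamma d / (Gamma a * Gamma b) by field_simp] at hlim
  refine hlim.congr' ?_
  filter_upwards [eventually_ne_atTop 0] with n hn
  have hn : (0 : ℝ) < n := by positivity
  have hpow :
      (n : ℝ) ^ a * (n : ℝ) ^ b = (n : ℝ) ^ c * (n : ℝ) ^ d * (n : ℝ) ^ (a + b - c - d) := by
    simp only [← rpow_add hn]
    ring_nf
  have : (n.factorial : ℝ) ≠ 0 := by positivity
  simp only [Pi.div_apply]
  field_simp
  congr 1
  linear_combination -(poch a (n + 1) * poch b (n + 1)) * hpow

lemma tendsto_natCast_rpow_atTop_zero {p : ℝ} (hp : p < 0) :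
    Tendsto (fun n : ℕ => (n : ℝ) ^ p) atTop (𝓝 0) := by
  simpa [Function.comp_def] using
    (tendsto_rpow_neg_atTop (neg_pos.mpr hp)).comp tendsto_natCast_atTop_atTop

noncomputable def gaussTerm (a b c : ℝ) (n : ℕ) : ℝ :=
  poch a n * poch b n / (poch c n * n.factorial)

section Gauss

variable {a b c : ℝ}

@[simp]
lemma gaussTerm_zero : gaussTerm a b c 0 = 1 := by simp [gaussTerm]

lemma gaussTerm_pos (ha : 0 < a) (hb : 0 < b) (hc : 0 < c) (n : ℕ) : 0 < gaussTerm a b c n := by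
  have := poch_pos ha n
  have := poch_pos hb n
  have := poch_pos hc n
  unfold gaussTerm
  positivity

lemma gaussTerm_add_one_mul (hc : 0 < c) (n : ℕ) :
    gaussTerm a b (c + 1) n * (c + n) = c * gaussTerm a b c n := by
  have hpoch : c * poch (c + 1) n = poch c n * (c + n) := by
    rw [← poch_succ_left, poch_succ_right]
  have := poch_pos hc n
  have := poch_pos (by linarith : 0 < c + 1) n
  unfold gaussTerm
  field_simp
  linear_combination -(poch a n * poch b n) * hpoch

lemma gaussTerm_contiguous (hc : 0 < c) (n : ℕ) :
    c * (c - a - b) * gaussTerm a b c n - (c - a) * (c - b) * gaussTerm a b (c + 1) n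
      = c * n * gaussTerm a b c n - c * (n + 1 : ℕ) * gaussTerm a b c (n + 1) := by
  have hshift := gaussTerm_add_one_mul (a := a) (b := b) hc n
  have hsucc : gaussTerm a b c (n + 1) * ((c + n) * (n + 1))
      = gaussTerm a b c n * ((a + n) * (b + n)) := by
    have := poch_pos hc n
    unfold gaussTerm
    rw [poch_succ_right a, poch_succ_right b, poch_succ_right c, Nat.factorial_succ]
    push_cast
    field_simp
  have hcn : c + n ≠ 0 := by positivity
  apply mul_left_cancel₀ hcn
  push_cast
  linear_combination (-(c - a) * (c - b)) * hshift + c * hsucc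

lemma isBigO_gaussTerm_succ (ha : 0 < a) (hb : 0 < b) (hc : 0 < c) :
    (fun n : ℕ => gaussTerm a b c (n + 1)) =O[atTop] fun n : ℕ => (n : ℝ) ^ (a + b - c - 1) := by
  refine isBigO_of_div_tendsto_nhds ?_ _ ((tendsto_poch_ratio (Gamma_pos_of_pos ha).ne'
    (Gamma_pos_of_pos hb).ne' (Gamma_pos_of_pos hc).ne' (by simp : Gamma 1 ≠ 0)).congr fun n => ?_)
  · filter_upwards [eventually_ne_atTop 0] with n hn h
    exact absurd h (by positivity)
  · simp [gaussTerm, poch_one]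

lemma summable_gaussTerm (ha : 0 < a) (hb : 0 < b) (hab : a + b < c) :
    Summable (gaussTerm a b c) :=
  (summable_nat_add_iff 1).mp <| summable_of_isBigO_nat (summable_nat_rpow.mpr (by linarith))
    (isBigO_gaussTerm_succ ha hb (by linarith))

lemma tendsto_mul_gaussTerm (ha : 0 < a) (hb : 0 < b) (hab : a + b < c) :
    Tendsto (fun n : ℕ => n * gaussTerm a b c n) atTop (𝓝 0) := by
  rw [← tendsto_add_atTop_iff_nat 1]
  have hO : (fun n : ℕ => ((n + 1 : ℕ) : ℝ) * gaussTerm a b c (n + 1)) =O[atTop]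
      fun n : ℕ => ((n : ℝ) + 1) * (n : ℝ) ^ (a + b - c - 1) :=
    (isBigO_refl (fun n : ℕ => ((n : ℝ) + 1)) atTop).mul (isBigO_gaussTerm_succ ha hb (by linarith))
      |>.congr_left fun n => by push_cast; rfl
  refine hO.trans_tendsto ?_
  have hlim := (tendsto_natCast_rpow_atTop_zero (p := a + b - c) (by linarith)).add
    (tendsto_natCast_rpow_atTop_zero (p := a + b - c - 1) (by linarith))
  rw [add_zero] at hlim
  refine hlim.congr' ?_
  filter_upwards [eventually_ne_atTop 0] with n hn
  rw [rpow_sub_one (by positivity)]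
  field_simp

lemma tsum_gaussTerm_contiguous (ha : 0 < a) (hb : 0 < b) (hab : a + b < c) :
    c * (c - a - b) * ∑' n, gaussTerm a b c n
      = (c - a) * (c - b) * ∑' n, gaussTerm a b (c + 1) n := by
  have hc : 0 < c := by linarith
  have hsum := ((summable_gaussTerm ha hb hab).hasSum.mul_left (c * (c - a - b))).sub
    ((summable_gaussTerm ha hb (by linarith : a + b < c + 1)).hasSum.mul_left ((c - a) * (c - b)))
  have htelescope : Tendsto (fun N => ∑ n ∈ range N,
      (c * (c - a - b) * gaussTerm a b c n - (c - a) * (c - b) * gaussTerm a b (c + 1) n))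
      atTop (𝓝 0) := by
    simp_rw [gaussTerm_contiguous hc, sum_range_sub' (fun n : ℕ => c * n * gaussTerm a b c n)]
    simpa [mul_assoc] using ((tendsto_mul_gaussTerm ha hb hab).const_mul c).const_sub 0
  exact sub_eq_zero.mp (tendsto_nhds_unique hsum.tendsto_sum_nat htelescope)

lemma tsum_gaussTerm_eq_mul_tsum_add_nat (ha : 0 < a) (hb : 0 < b) (hab : a + b < c) (m : ℕ) :
    ∑' n, gaussTerm a b c n = poch (c - a) m * poch (c - b) m / (poch c m * poch (c - a - b) m)
      * ∑' n, gaussTerm a b (c + m) n := by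
  induction m with
  | zero => simp
  | succ m ih =>
    have hcm : a + b < c + m := by linarith [(m.cast_nonneg : (0 : ℝ) ≤ m)]
    have hstep := tsum_gaussTerm_contiguous ha hb hcm
    have := poch_pos (by linarith : 0 < c) m
    have := poch_pos (by linarith : 0 < c - a - b) m
    have : c - a - b + m ≠ 0 := by linarith
    have : c + m ≠ 0 := by linarith
    rw [ih, poch_succ_right, poch_succ_right, poch_succ_right, poch_succ_right, Nat.cast_succ,
      ← add_assoc]
    field_simp
    linear_combination (poch (c - a) m * poch (c - b) m) * hstep

lemma tsum_gaussTerm_le (ha : 0 < a) (hb : 0 < b) (hab : a + b < c) {c' : ℝ} (hcc' : c ≤ c') :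
    ∑' n, gaussTerm a b c' n ≤ 1 + c / c' * (∑' n, gaussTerm a b c n - 1) := by
  have hc : 0 < c := by linarith
  have hc' : 0 < c' := by linarith
  have hterm (n : ℕ) : gaussTerm a b c' (n + 1) ≤ c / c' * gaussTerm a b c (n + 1) := by
    have := poch_pos (by linarith : 0 < c + 1) n
    have := poch_le_poch (by linarith : 0 ≤ c + 1) (by linarith : c + 1 ≤ c' + 1) n
    have := poch_pos ha (n + 1)
    have := poch_pos hb (n + 1)
    unfold gaussTerm
    rw [poch_succ_left c, poch_succ_left c']
    calc poch a (n + 1) * poch b (n + 1) / (c' * poch (c' + 1) n * (n + 1).factorial)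
        ≤ poch a (n + 1) * poch b (n + 1) / (c' * poch (c + 1) n * (n + 1).factorial) := by
          gcongr
      _ = c / c' *
            (poch a (n + 1) * poch b (n + 1) / (c * poch (c + 1) n * (n + 1).factorial)) := by
          field_simp
  have hs := summable_gaussTerm ha hb hab
  have hs' := summable_gaussTerm ha hb (hab.trans_le hcc')
  rw [hs.tsum_eq_zero_add, hs'.tsum_eq_zero_add, gaussTerm_zero, gaussTerm_zero,
    add_sub_cancel_left, ← tsum_mul_left]
  exact add_le_add_right (hs'.comp_injective (add_left_injective 1) |>.tsum_le_tsum hterm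
    ((hs.comp_injective (add_left_injective 1)).mul_left _)) 1

lemma tendsto_tsum_gaussTerm_add_nat (ha : 0 < a) (hb : 0 < b) (hab : a + b < c) :
    Tendsto (fun m : ℕ => ∑' n, gaussTerm a b (c + m) n) atTop (𝓝 1) := by
  have hlim : Tendsto (fun m : ℕ => 1 + c / (c + m) * (∑' n, gaussTerm a b c n - 1)) atTop
      (𝓝 (1 + 0 * (∑' n, gaussTerm a b c n - 1))) :=
    ((tendsto_const_nhds.div_atTop (tendsto_atTop_add_const_left _ c
      tendsto_natCast_atTop_atTop)).mul_const _).const_add 1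
  rw [zero_mul, add_zero] at hlim
  refine tendsto_of_tendsto_of_tendsto_of_le_of_le tendsto_const_nhds hlim (fun m => ?_)
    fun m => tsum_gaussTerm_le ha hb hab (by simp)
  have hcm : a + b < c + m := by linarith [(m.cast_nonneg : (0 : ℝ) ≤ m)]
  simpa using (summable_gaussTerm ha hb hcm).le_tsum 0
    fun n _ => (gaussTerm_pos ha hb (by linarith) n).le

theorem hasSum_gaussTerm (ha : 0 < a) (hb : 0 < b) (hab : a + b < c) :
    HasSum (gaussTerm a b c) (Gamma c * Gamma (c - a - b) / (Gamma (c - a) * Gamma (c - b))) := by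
  refine (summable_gaussTerm ha hb hab).hasSum_iff.mpr ?_
  have hratio := tendsto_poch_ratio (a := c - a) (b := c - b) (c := c) (d := c - a - b)
    (Gamma_pos_of_pos (by linarith)).ne' (Gamma_pos_of_pos (by linarith)).ne'
    (Gamma_pos_of_pos (by linarith)).ne' (Gamma_pos_of_pos (by linarith)).ne'
  simp only [show c - a + (c - b) - c - (c - a - b) = 0 by ring, rpow_zero, div_one] at hratio
  have hlim :=
    hratio.mul ((tendsto_tsum_gaussTerm_add_nat ha hb hab).comp (tendsto_add_atTop_nat 1))
  rw [mul_one] at hlim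
  exact tendsto_nhds_unique (tendsto_const_nhds.congr
    fun m => tsum_gaussTerm_eq_mul_tsum_add_nat ha hb hab (m + 1)) hlim

end Gauss

lemma hasSum_gaussTerm_add_nat_succ {a b : ℝ} (ha : 0 < a) (hb : 0 < b) (k : ℕ) :
    HasSum (gaussTerm a b (a + b + (k + 1 : ℕ)))
      ((Beta a b)⁻¹ *
        (poch (a + b) (k + 1) * k.factorial / (poch a (k + 1) * poch b (k + 1)))) := by
  have hk : (0 : ℝ) < (k + 1 : ℕ) := by positivity
  convert hasSum_gaussTerm ha hb (by linarith : a + b < a + b + (k + 1 : ℕ)) using 1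
  rw [show a + b + ((k + 1 : ℕ) : ℝ) - a - b = (k + 1 : ℕ) by ring,
    show a + b + ((k + 1 : ℕ) : ℝ) - a = b + (k + 1 : ℕ) by ring,
    show a + b + ((k + 1 : ℕ) : ℝ) - b = a + (k + 1 : ℕ) by ring,
    Gamma_add_nat_eq_mul_poch (fun _ => by positivity),
    Gamma_add_nat_eq_mul_poch (fun _ => by positivity),
    Gamma_add_nat_eq_mul_poch (fun _ => by positivity), Nat.cast_succ, Gamma_nat_eq_factorial, Beta]
  have := Gamma_pos_of_pos ha
  have := Gamma_pos_of_pos hb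
  have := poch_pos ha (k + 1)
  have := poch_pos hb (k + 1)
  field_simp

lemma hasSum_poch_div_poch_succ {c x : ℝ} (hc : 0 < c) (hcx : c < x) :
    HasSum (fun m => poch c m / poch x (m + 1)) (x - c)⁻¹ := by
  have hx : 0 < x := hc.trans hcx
  have h := (hasSum_gaussTerm hc one_pos (by linarith : c + 1 < x + 1)).div_const x
  rw [show x + 1 - c - 1 = x - c by ring, show x + 1 - c = x - c + 1 by ring, add_sub_cancel_right,
    Gamma_add_one hx.ne', Gamma_add_one (by linarith : x - c ≠ 0)] at h
  have := Gamma_pos_of_pos hx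
  have := Gamma_pos_of_pos (by linarith : 0 < x - c)
  have : x - c ≠ 0 := by linarith
  have hterm (m : ℕ) : gaussTerm c 1 (x + 1) m / x = poch c m / poch x (m + 1) := by
    have := poch_pos (by linarith : 0 < x + 1) m
    have : (m.factorial : ℝ) ≠ 0 := by positivity
    rw [gaussTerm, poch_one, poch_succ_left]
    field_simp
  rw [show x * Gamma x * Gamma (x - c) / ((x - c) * Gamma (x - c) * Gamma x) / x = (x - c)⁻¹ by
    field_simp] at h
  simpa only [hterm] using h

noncomputable def doubleTerm (a b c : ℝ) (n m : ℕ) : ℝ :=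
  gaussTerm a b (a + b) n * (poch c m / poch (a + b + n) (m + 1))

section DoubleSeries

variable {a b c : ℝ}

lemma doubleTerm_nonneg (ha : 0 < a) (hb : 0 < b) (hc : 0 < c) (n m : ℕ) :
    0 ≤ doubleTerm a b c n m := by
  have := gaussTerm_pos ha hb (by linarith : 0 < a + b) n
  have := poch_pos hc m
  have := poch_pos (by positivity : 0 < a + b + n) (m + 1)
  unfold doubleTerm
  positivity

lemma hasSum_doubleTerm_row {q : ℝ} (hq : 0 < q) (hqab : q < a + b) (n : ℕ) :
    HasSum (doubleTerm a b (a + b - q) n) (gaussTerm a b (a + b) n / (q + n)) := by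
  have h := (hasSum_poch_div_poch_succ (by linarith : 0 < a + b - q)
    (by linarith [(n.cast_nonneg : (0 : ℝ) ≤ n)] : a + b - q < a + b + n)).mul_left
    (gaussTerm a b (a + b) n)
  rwa [show a + b + n - (a + b - q) = q + n by ring, ← div_eq_mul_inv] at h

lemma hasSum_doubleTerm_col (ha : 0 < a) (hb : 0 < b) (c : ℝ) (m : ℕ) :
    HasSum (fun n => doubleTerm a b c n m)
      ((Beta a b)⁻¹ * (poch c m * m.factorial / (poch a (m + 1) * poch b (m + 1)))) := by
  have hsplit (n : ℕ) : poch (a + b) n * poch (a + b + n) (m + 1)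
      = poch (a + b) (m + 1) * poch (a + b + (m + 1 : ℕ)) n := by
    rw [← poch_add, ← poch_add, Nat.add_comm n]
  have hpos := poch_pos (by linarith : 0 < a + b) (m + 1)
  have h := (hasSum_gaussTerm_add_nat_succ ha hb m).mul_left (poch c m / poch (a + b) (m + 1))
  have hterm (n : ℕ) : poch c m / poch (a + b) (m + 1) * gaussTerm a b (a + b + (m + 1 : ℕ)) n
      = doubleTerm a b c n m := by
    have := poch_pos (by linarith : 0 < a + b) n
    have := poch_pos (by positivity : 0 < a + b + n) (m + 1)
    have := poch_pos (by positivity : 0 < a + b + (m + 1 : ℕ)) n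
    have : (n.factorial : ℝ) ≠ 0 := by positivity
    unfold doubleTerm gaussTerm
    field_simp
    linear_combination (poch a n * poch b n * poch c m) * hsplit n
  simp only [hterm] at h
  rwa [mul_left_comm, show poch c m / poch (a + b) (m + 1) * (poch (a + b) (m + 1) * m.factorial
      / (poch a (m + 1) * poch b (m + 1)))
      = poch c m * m.factorial / (poch a (m + 1) * poch b (m + 1)) by field_simp] at h

lemma summable_gaussTerm_div_add (ha : 0 < a) (hb : 0 < b) {q : ℝ} (hq : 0 < q)
    (hqab : q < a + b) :
    Summable fun n : ℕ => gaussTerm a b (a + b) n / (q + n) := by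
  refine Summable.of_nonneg_of_le (fun n => ?_) (fun n => ?_)
    ((summable_gaussTerm ha hb (by linarith : a + b < a + b + 1)).mul_left q⁻¹)
  · have := gaussTerm_pos ha hb (by linarith : 0 < a + b) n
    positivity
  · have hshift := gaussTerm_add_one_mul (a := a) (b := b) (by linarith : 0 < a + b) n
    have ht := gaussTerm_pos ha hb (by linarith : 0 < a + b) n
    have hn : (0 : ℝ) ≤ n := n.cast_nonneg
    have hmul : q * gaussTerm a b (a + b) n * (a + b + n)
        ≤ gaussTerm a b (a + b + 1) n * (q + n) * (a + b + n) := by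
      nlinarith [mul_nonneg (mul_nonneg ht.le hn) (by linarith : (0 : ℝ) ≤ a + b - q)]
    have hle := le_of_mul_le_mul_right hmul (by positivity)
    rw [div_le_iff₀ (by positivity), inv_mul_eq_div, div_mul_eq_mul_div, le_div_iff₀ hq]
    linarith

end DoubleSeries

lemma F32_eq_mul_tsum_gaussTerm_div_add {a b q : ℝ} (hq : 0 < q) :
    F32 a b q (a + b) (q + 1) 1 = q * ∑' n, gaussTerm a b (a + b) n / (q + n) := by
  rw [F32, ← tsum_mul_left]
  refine tsum_congr fun n => ?_
  have hpoch : poch q n * (q + n) = q * poch (q + 1) n := by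
    rw [← poch_succ_right, poch_succ_left]
  have := poch_pos (by linarith : 0 < q + 1) n
  have : q + n ≠ 0 := by positivity
  rw [gaussTerm, one_pow, mul_one]
  field_simp
  rw [mul_assoc _ (poch q n), hpoch]
  ring

lemma F32_one_one_eq_mul_tsum {a b : ℝ} (ha : 0 < a) (hb : 0 < b) (c : ℝ) :
    F32 1 1 c (a + 1) (b + 1) 1
      = a * b * ∑' m, poch c m * m.factorial / (poch a (m + 1) * poch b (m + 1)) := by
  rw [F32, ← tsum_mul_left]
  refine tsum_congr fun m => ?_
  have := poch_pos (by linarith : 0 < a + 1) m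
  have := poch_pos (by linarith : 0 < b + 1) m
  have : (m.factorial : ℝ) ≠ 0 := by positivity
  rw [poch_one, one_pow, mul_one, poch_succ_left a, poch_succ_left b]
  field_simp

lemma Beta_pos {a b : ℝ} (ha : 0 < a) (hb : 0 < b) : 0 < Beta a b := by
  have := Gamma_pos_of_pos ha
  have := Gamma_pos_of_pos hb
  have := Gamma_pos_of_pos (add_pos ha hb)
  unfold Beta
  positivity

theorem stmt0 (a b q : ℝ) (ha : 0 < a) (hb : 0 < b) (hq : 0 < q) (hab : q < a + b) :
    Beta a b * F32 a b q (a + b) (q + 1) 1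
      = q / (a * b) * F32 1 1 (a + b - q) (a + 1) (b + 1) 1 := by
  have hrow := hasSum_doubleTerm_row (a := a) (b := b) hq hab
  have hcol := hasSum_doubleTerm_col ha hb (a + b - q)
  have hsum : Summable (Function.uncurry (doubleTerm a b (a + b - q))) :=
    (summable_prod_of_nonneg fun p => doubleTerm_nonneg ha hb (by linarith) p.1 p.2).mpr
      ⟨fun n => (hrow n).summable,
        (summable_gaussTerm_div_add ha hb hq hab).congr fun n => (hrow n).tsum_eq.symm⟩
  have hB := (Beta_pos ha hb).ne'
  rw [F32_eq_mul_tsum_gaussTerm_div_add hq, F32_one_one_eq_mul_tsum ha hb,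
    ← tsum_congr fun n => (hrow n).tsum_eq,
    ← hsum.tsum_comm' (fun n => (hrow n).summable) fun m => (hcol m).summable,
    tsum_congr fun m => (hcol m).tsum_eq, tsum_mul_left]
  field_simp
end

section
/- Let $a, b, q \in (0,1)$ be real with $a > q$ and $b > q$, and $0 < z \le 1$. Under the change of variables $x = t_1$, $y = (1-t_1)/(1-z t_1 t_2)$ on $(0,1)^2$, one has the identity of differential forms $z^q t_1^{a-1} t_2^{q-1} (1-t_1)^{b-1} (1-z t_1 t_2)^{-b} \, dt_1 \, dt_2 = x^{a-q-1} y^{b-q-1} (x + y - 1)^{q-1}\, dx\, dy$ wherever $x+y > 1$; that is, the absolute value of the Jacobian determinant of the inverse map $(x,y) \mapsto (t_1,t_2)$ transforms the integrand as stated. -/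
/-!
Since `t₁ = x` does not depend on `y`, the Jacobian of `(x, y) ↦ (t₁, t₂)` is just
`∂t₂/∂y = (1 - x)/(z x y²)`. Along the substitution `1 - z t₁ t₂ = (1 - x)/y`, hence every factor
of the integrand becomes a power of `z`, `x`, `y`, `1 - x` or `x + y - 1`: the powers of `z` and
of `1 - x` cancel, and the exponents of `x` and `y` each drop by `q`.
-/

open Real

lemma hasDerivAt_add_sub_one_div_mul (x c y : ℝ) (hc : c ≠ 0) (hy : y ≠ 0) :
    HasDerivAt (fun y' : ℝ => (x + y' - 1) / (c * y')) ((1 - x) / (c * y ^ 2)) y := by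
  have hnum : HasDerivAt (fun y' : ℝ => x + y' - 1) 1 y :=
    ((hasDerivAt_id y).const_add x).sub_const 1
  have hden : HasDerivAt (fun y' : ℝ => c * y') c y := by
    simpa using (hasDerivAt_id y).const_mul c
  refine (hnum.div hden (mul_ne_zero hc hy)).congr_deriv ?_
  field_simp
  ring

lemma one_sub_mul_div_mul_mul {z x y : ℝ} (hz : z ≠ 0) (hx : x ≠ 0) (hy : y ≠ 0) :
    1 - z * x * ((x + y - 1) / (z * x * y)) = (1 - x) / y := by
  field_simp
  ring

lemma rpow_sub_sub_one {x : ℝ} (hx : 0 < x) (a q : ℝ) : x ^ (a - q - 1) = x ^ a / (x ^ q * x) := by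
  rw [sub_sub, rpow_sub hx, rpow_add hx, rpow_one]

lemma rpow_sub_one_mul_div_rpow_neg {u v : ℝ} (hu : 0 < u) (hv : 0 < v) (b : ℝ) :
    u ^ (b - 1) * (u / v) ^ (-b) = v ^ b / u := by
  rw [rpow_sub_one hu.ne', rpow_neg (div_pos hu hv).le, div_rpow hu.le hv.le]
  have : 0 < u ^ b := rpow_pos_of_pos hu b
  field_simp

lemma div_mul_mul_rpow_sub_one {p : ℝ} (hp : 0 ≤ p) {z x y : ℝ} (hz : 0 < z) (hx : 0 < x)
    (hy : 0 < y) (q : ℝ) :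
    (p / (z * x * y)) ^ (q - 1) = p ^ (q - 1) * (z * x * y) / (z ^ q * x ^ q * y ^ q) := by
  have hzxy : 0 < z * x * y := by positivity
  rw [div_rpow hp hzxy.le, rpow_sub_one hzxy.ne', mul_rpow (mul_pos hz hx).le hy.le,
    mul_rpow hz.le hx.le]
  field_simp

theorem stmt7_general (a b q z x y : ℝ)
    (hz : 0 < z)
    (hx : x ∈ Set.Ioo (0:ℝ) 1) (hy : y ∈ Set.Ioo (0:ℝ) 1) (hxy : 1 < x + y) :
    HasDerivAt (fun y' : ℝ => (x + y' - 1) / (z * x * y')) ((1 - x) / (z * x * y ^ 2)) y ∧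
    (fun t₁ t₂ => z ^ q * t₁ ^ (a - 1) * t₂ ^ (q - 1) * (1 - t₁) ^ (b - 1)
        * (1 - z * t₁ * t₂) ^ (-b)) x ((x + y - 1) / (z * x * y))
      * |(1 - x) / (z * x * y ^ 2)|
    = x ^ (a - q - 1) * y ^ (b - q - 1) * (x + y - 1) ^ (q - 1) := by
  obtain ⟨hx0, hx1⟩ := hx
  obtain ⟨hy0, -⟩ := hy
  have h1x : 0 < 1 - x := by linarith
  refine ⟨hasDerivAt_add_sub_one_div_mul x (z * x) y (by positivity) hy0.ne', ?_⟩
  have hpowers : 0 < z ^ q * x ^ q * y ^ q := by positivity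
  calc z ^ q * x ^ (a - 1) * ((x + y - 1) / (z * x * y)) ^ (q - 1) * (1 - x) ^ (b - 1)
          * (1 - z * x * ((x + y - 1) / (z * x * y))) ^ (-b) * |(1 - x) / (z * x * y ^ 2)|
      = z ^ q * (x ^ a / x) * ((x + y - 1) ^ (q - 1) * (z * x * y) / (z ^ q * x ^ q * y ^ q))
          * ((1 - x) ^ (b - 1) * ((1 - x) / y) ^ (-b)) * ((1 - x) / (z * x * y ^ 2)) := by
        rw [one_sub_mul_div_mul_mul hz.ne' hx0.ne' hy0.ne', abs_of_pos (by positivity),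
          rpow_sub_one hx0.ne', div_mul_mul_rpow_sub_one (by linarith) hz hx0 hy0]
        ring
    _ = x ^ a / (x ^ q * x) * (y ^ b / (y ^ q * y)) * (x + y - 1) ^ (q - 1) := by
        rw [rpow_sub_one_mul_div_rpow_neg h1x hy0]
        field_simp
    _ = x ^ (a - q - 1) * y ^ (b - q - 1) * (x + y - 1) ^ (q - 1) := by
        rw [rpow_sub_sub_one hx0, rpow_sub_sub_one hy0]

/-- The pulled-back 2-form identity for the substitution `t₁ = x`,
`t₂ = (x+y-1)/(z·x·y)` (i.e. `y = (1-t₁)/(1-z·t₁·t₂)`).  Since `t₁` does not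
depend on `y`, the Jacobian determinant of `(x,y) ↦ (t₁,t₂)` is `∂t₂/∂y`,
which equals `(1-x)/(z·x·y²)`; the absolute value of the Jacobian transforms
the integrand as stated. -/
theorem stmt7 (a b q z x y : ℝ)
    (ha : a ∈ Set.Ioo (0:ℝ) 1) (hb : b ∈ Set.Ioo (0:ℝ) 1) (hq : q ∈ Set.Ioo (0:ℝ) 1)
    (haq : q < a) (hbq : q < b) (hz : 0 < z) (hz1 : z ≤ 1)
    (hx : x ∈ Set.Ioo (0:ℝ) 1) (hy : y ∈ Set.Ioo (0:ℝ) 1) (hxy : 1 < x + y) :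
    HasDerivAt (fun y' : ℝ => (x + y' - 1) / (z * x * y')) ((1 - x) / (z * x * y ^ 2)) y ∧
    (fun t₁ t₂ => z ^ q * t₁ ^ (a - 1) * t₂ ^ (q - 1) * (1 - t₁) ^ (b - 1)
        * (1 - z * t₁ * t₂) ^ (-b)) x ((x + y - 1) / (z * x * y))
      * |(1 - x) / (z * x * y ^ 2)|
    = x ^ (a - q - 1) * y ^ (b - q - 1) * (x + y - 1) ^ (q - 1) :=
  stmt7_general a b q z x y hz hx hy hxy
end
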